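/- Let G be a finite Frobenius group with kernel F and complement of order n ≥ 2. Then every element of G − F is a vanishing element of G, hence pv(G) ≥ (n−1)/n. -/

import Mathlib

open CategoryTheory

/-- An element `g` of a group is a *vanishing element* if some irreducible complex
character vanishes at `g`. -/
def IsVanishing {G : Type} [Group G] (g : G) : Prop :=
  ∃ V : FDRep ℂ G, Simple V ∧ V.character g = 0

/-- The proportion of vanishing elements of `G`. -/
noncomputable def pv (G : Type) [Group G] : ℝ :=
  (Set.ncard {g : G | IsVanishing g}) / (Nat.card G)

/-- The proportion of non-vanishing elements of `G`. -/
noncomputable def pnv (G : Type) [Group G] : ℝ :=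
  (Set.ncard {g : G | ¬ IsVanishing g}) / (Nat.card G)


/-- `G` is a Frobenius group with kernel `F`: `F` is a nontrivial proper normal subgroup
and the centralizer of every nonidentity element of `F` is contained in `F`. -/
def IsFrobeniusWithKernel (G : Type) [Group G] (F : Subgroup G) : Prop :=
  F.Normal ∧ F ≠ ⊥ ∧ F ≠ ⊤ ∧
    ∀ x ∈ F, x ≠ 1 → ∀ g : G, g * x = x * g → g ∈ F

/-!
Let `ρ` be an irreducible representation of `G` without nonzero `F`-fixed vectors. It exists
because the `F`-fixed vectors of the regular representation form a proper subrepresentation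
(`F ≠ 1`), and any irreducible subrepresentation of a complement of it will do.
Since `∑_{f ∈ F} ρ f` maps into the `F`-fixed vectors, it vanishes, so for `g ∉ F` the character
`χ` of `ρ` sums to zero over the coset `gF`. The Frobenius condition makes `y ↦ y g y⁻¹` a bijection
from `F` onto `gF`, so every term of that sum is `χ g`, hence `χ g = 0`.
-/

universe u

open Representation

namespace IsFrobeniusWithKernel

variable {G : Type} [Group G] {F : Subgroup G}

theorem eq_one_of_commute (hF : IsFrobeniusWithKernel G F) {g x : G} (hg : g ∉ F) (hx : x ∈ F)
    (h : Commute g x) : x = 1 := by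
  by_contra hx1
  exact hg (hF.2.2.2 x hx hx1 g h)

theorem exists_conj_eq_mul [Finite G] (hF : IsFrobeniusWithKernel G F) {g f : G} (hg : g ∉ F)
    (hf : f ∈ F) : ∃ y ∈ F, y * g * y⁻¹ = g * f := by
  have hFn : F.Normal := hF.1
  let φ : F → F := fun y =>
    ⟨g⁻¹ * y * g * y⁻¹, F.mul_mem (by simpa using hFn.conj_mem y y.2 g⁻¹) (F.inv_mem y.2)⟩
  have hφ : Function.Injective φ := by
    intro y₁ y₂ h
    have h' : g⁻¹ * y₁ * g * (y₁ : G)⁻¹ = g⁻¹ * y₂ * g * (y₂ : G)⁻¹ := congrArg Subtype.val h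
    have hconj : (y₁ : G) * g * (y₁ : G)⁻¹ = y₂ * g * (y₂ : G)⁻¹ := by
      simpa only [mul_assoc, mul_inv_cancel_left] using congrArg (g * ·) h'
    have hcomm : Commute g ((y₂ : G)⁻¹ * y₁) :=
      calc g * ((y₂ : G)⁻¹ * y₁) = (y₂ : G)⁻¹ * (y₂ * g * (y₂ : G)⁻¹) * y₁ := by group
        _ = (y₂ : G)⁻¹ * (y₁ * g * (y₁ : G)⁻¹) * y₁ := by rw [hconj]
        _ = (y₂ : G)⁻¹ * y₁ * g := by group
    have := hF.eq_one_of_commute hg (F.mul_mem (F.inv_mem y₂.2) y₁.2) hcomm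
    exact Subtype.ext (inv_mul_eq_one.mp this).symm
  obtain ⟨y, hy⟩ := Finite.injective_iff_surjective.mp hφ ⟨f, hf⟩
  have hyf : g⁻¹ * y * g * (y : G)⁻¹ = f := congrArg Subtype.val hy
  exact ⟨y, y.2, by rw [← hyf]; group⟩

end IsFrobeniusWithKernel

namespace Subrepresentation

variable {k G V : Type*} [Field k] [Monoid G] [AddCommGroup V] [Module k V]
  {ρ : Representation k G V}

theorem toSubmodule_strictMono :
    StrictMono (toSubmodule : Subrepresentation ρ → Submodule k V) := fun _ _ h => h

instance [FiniteDimensional k V] : WellFoundedLT (Subrepresentation ρ) :=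
  toSubmodule_strictMono.wellFoundedLT

theorem isIrreducible_toRepresentation {σ : Subrepresentation ρ} (hσ : IsAtom σ) :
    σ.toRepresentation.IsIrreducible := by
  let ι (W : Subrepresentation σ.toRepresentation) : Subrepresentation ρ :=
    ⟨W.toSubmodule.map σ.toSubmodule.subtype, by
      rintro g _ ⟨v, hv, rfl⟩
      exact ⟨_, W.apply_mem_toSubmodule g hv, rfl⟩⟩
  have hι : ∀ W, ι W ≤ σ := by
    rintro W _ ⟨v, -, rfl⟩
    exact v.2
  have hinj : Function.Injective ι := fun W W' h => toSubmodule_injective <|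
    Submodule.map_injective_of_injective σ.toSubmodule.injective_subtype (congrArg toSubmodule h)
  have hbot : ι ⊥ = ⊥ := toSubmodule_injective (Submodule.map_bot _)
  have htop : ι ⊤ = σ := toSubmodule_injective (Submodule.map_subtype_top _)
  exact
    { exists_pair_ne := ⟨⊥, ⊤, fun h => hσ.1 (by rw [← htop, ← h, hbot])⟩
      eq_bot_or_eq_top := fun W => (hσ.le_iff.mp (hι W)).imp
        (fun h => hinj (h.trans hbot.symm)) (fun h => hinj (h.trans htop.symm)) }

end Subrepresentation

namespace Representation

variable {k G V : Type*} [Field k] [Group G] [AddCommGroup V] [Module k V]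
  (ρ : Representation k G V)

theorem norm_eq_zero_of_invariants_eq_bot [Fintype G] (h : invariants ρ = ⊥) : ρ.norm = 0 :=
  LinearMap.ext fun v => by
    simpa [h] using (show ρ.norm v ∈ invariants ρ from fun g => ρ.self_norm_apply g v)

theorem sum_character_mul_eq_zero {F : Subgroup G} [Fintype F]
    (h : invariants (ρ.comp F.subtype) = ⊥) (g : G) : ∑ f : F, ρ.character (g * f) = 0 := by
  have hnorm : ∑ f : F, ρ f = 0 := norm_eq_zero_of_invariants_eq_bot _ h
  simp only [character, map_mul, ← map_sum, ← Finset.mul_sum, hnorm, mul_zero, map_zero]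

noncomputable def invariantsOfNormal (F : Subgroup G) [F.Normal] : Subrepresentation ρ :=
  ⟨invariants (ρ.comp F.subtype), le_comap_invariants ρ F⟩

theorem exists_isAtom_disjoint [Finite G] [NeZero (Nat.card G : k)] [FiniteDimensional k V]
    {W : Subrepresentation ρ} (hW : W ≠ ⊤) : ∃ σ : Subrepresentation ρ, IsAtom σ ∧ Disjoint σ W := by
  obtain ⟨C, hC⟩ := exists_isCompl W
  have hC0 : C ≠ ⊥ := fun h => hW (by simpa [h] using hC.sup_eq_top)
  obtain ⟨σ, hσ, hσC⟩ := (eq_bot_or_exists_atom_le C).resolve_left hC0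
  exact ⟨σ, hσ, hC.disjoint.symm.mono_left hσC⟩

end Representation

namespace FDRep

theorem simple_of_isIrreducible {k G V : Type u} [Field k] [IsAlgClosed k] [CharZero k]
    [Group G] [Fintype G] [AddCommGroup V] [Module k V] [FiniteDimensional k V]
    (ρ : Representation k G V) [ρ.IsIrreducible] : Simple (FDRep.of ρ) := by
  have := invertibleOfNonzero (NeZero.ne (Nat.card G : k))
  rw [simple_iff_char_is_norm_one]
  have h := Representation.char_orthonormal ρ ρ
  simp only [show Nonempty (ρ.Equiv ρ) from ⟨.refl ρ⟩, if_true] at h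
  exact ((inv_mul_eq_one₀ (NeZero.ne _)).mp h).symm

theorem exists_simple_invariants_eq_bot {k G : Type u} [Field k] [IsAlgClosed k] [CharZero k]
    [Group G] [Finite G] {F : Subgroup G} [F.Normal] (hF : F ≠ ⊥) :
    ∃ V : FDRep k G, Simple V ∧ invariants (V.ρ.comp F.subtype) = ⊥ := by
  have := Fintype.ofFinite G
  let ρ := leftRegular k G
  have hW : ρ.invariantsOfNormal F ≠ ⊤ := by
    obtain ⟨x, hxF, hx1⟩ := F.bot_or_exists_ne_one.resolve_left hF
    intro h
    have hfix : MonoidAlgebra.single (1 : G) (1 : k) ∈ ρ.invariantsOfNormal F := h ▸ trivial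
    exact hx1 (by simpa [ρ, ofMulAction_single, MonoidAlgebra.single_left_inj] using hfix ⟨x, hxF⟩)
  obtain ⟨σ, hσ, hdisj⟩ := ρ.exists_isAtom_disjoint hW
  have := Subrepresentation.isIrreducible_toRepresentation hσ
  refine ⟨FDRep.of σ.toRepresentation, simple_of_isIrreducible _, eq_bot_iff.mpr fun v hv => ?_⟩
  have hmem : (v : MonoidAlgebra k G) ∈ σ ⊓ ρ.invariantsOfNormal F :=
    ⟨v.2, fun f => congrArg Subtype.val (hv f)⟩
  rw [hdisj.eq_bot] at hmem
  exact (Submodule.mem_bot k).mpr (Subtype.ext hmem)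

end FDRep

namespace IsFrobeniusWithKernel

variable {G : Type} [Group G] [Finite G] {F : Subgroup G}

theorem character_eq_zero (hF : IsFrobeniusWithKernel G F) {k V : Type*} [Field k] [CharZero k]
    [AddCommGroup V] [Module k V] (ρ : Representation k G V)
    (hρ : invariants (ρ.comp F.subtype) = ⊥) {g : G} (hg : g ∉ F) : ρ.character g = 0 := by
  have := Fintype.ofFinite F
  have hsum := ρ.sum_character_mul_eq_zero hρ g
  have hconst : ∀ f : F, ρ.character (g * f) = ρ.character g := fun f => by
    obtain ⟨y, -, hy⟩ := hF.exists_conj_eq_mul hg f.2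
    rw [← hy, char_conj]
  simpa [hconst] using hsum

theorem isVanishing (hF : IsFrobeniusWithKernel G F) {g : G} (hg : g ∉ F) : IsVanishing g := by
  have := hF.1
  obtain ⟨V, hV, hinv⟩ := FDRep.exists_simple_invariants_eq_bot (k := ℂ) hF.2.1
  exact ⟨V, hV, hF.character_eq_zero V.ρ hinv hg⟩

end IsFrobeniusWithKernel

theorem Subgroup.ncard_compl_div_card {G : Type*} [Group G] [Finite G] (H : Subgroup G) :
    ((H : Set G)ᶜ.ncard : ℝ) / Nat.card G = (H.index - 1) / H.index := by
  have hcompl := Set.ncard_add_ncard_compl (H : Set G)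
  rw [← Nat.card_coe_set_eq, SetLike.coe_sort_coe, ← H.card_mul_index] at hcompl
  have hcompl' : (Nat.card H : ℝ) + (H : Set G)ᶜ.ncard = Nat.card H * H.index := by
    exact_mod_cast hcompl
  have hH : (Nat.card H : ℝ) ≠ 0 := Nat.cast_ne_zero.mpr Nat.card_pos.ne'
  rw [← H.card_mul_index, Nat.cast_mul, eq_sub_of_add_eq' hcompl']
  field_simp

theorem stmt6_general (G : Type) [Group G] [Finite G] (F : Subgroup G)
    (hF : IsFrobeniusWithKernel G F) (n : ℕ) (hn : F.index = n) :
    (∀ g : G, g ∉ F → IsVanishing g) ∧ pv G ≥ ((n : ℝ) - 1) / n := by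
  have hvan : ∀ g : G, g ∉ F → IsVanishing g := fun _ => hF.isVanishing
  refine ⟨hvan, ?_⟩
  rw [← hn, ← F.ncard_compl_div_card, pv, ge_iff_le]
  exact div_le_div_of_nonneg_right (by exact_mod_cast Set.ncard_le_ncard hvan) (Nat.cast_nonneg _)

theorem stmt6 (G : Type) [Group G] [Finite G] (F : Subgroup G)
    (hF : IsFrobeniusWithKernel G F) (n : ℕ) (hn : F.index = n) (hn2 : 2 ≤ n) :
    (∀ g : G, g ∉ F → IsVanishing g) ∧ pv G ≥ ((n : ℝ) - 1) / n :=
  stmt6_general G F hF n hn
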